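/- For all i, j ∈ {1,…,n} with i ≥ j, substituting t = 0 into the polynomial f_{i,j} ∈ ℚ[x_1,…,x_n,t] yields f_{i,j}(x_1,…,x_n,0) = Σ_{k=1}^{j} ( x_k · Π_{ℓ=j+1}^{i} (x_k − x_ℓ) ) in ℚ[x_1,…,x_n], where the empty product Π_{ℓ=j+1}^{j} is 1. -/

import Mathlib

/-- The variable `x_k` (for `1 ≤ k ≤ n`) in `ℚ[x_1,…,x_n,t]`, realized as
`MvPolynomial (Fin (n+1)) ℚ` where the variable of index `0` is `t`. -/
noncomputable def xv (n k : ℕ) : MvPolynomial (Fin (n + 1)) ℚ :=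
  if h : k ≤ n then MvPolynomial.X ⟨k, Nat.lt_succ_of_le h⟩ else 0

/-- The variable `t` in `ℚ[x_1,…,x_n,t]`. -/
noncomputable def tv (n : ℕ) : MvPolynomial (Fin (n + 1)) ℚ :=
  MvPolynomial.X 0

/-- `p_i := Σ_{k=1}^{i} (x_k − k·t)`, with `p_0 = 0`. -/
noncomputable def pp (n i : ℕ) : MvPolynomial (Fin (n + 1)) ℚ :=
  ∑ k ∈ Finset.Icc 1 i, (xv n k - (k : MvPolynomial (Fin (n + 1)) ℚ) * tv n)

/-- The polynomials `f_{i,j}`: `f_{j,j} = p_j`, `f_{i,0} = 0`, and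
`f_{i,j} = f_{i−1,j−1} + (x_j − x_i − t)·f_{i−1,j}` for `i > j ≥ 1`. -/
noncomputable def ff (n : ℕ) : ℕ → ℕ → MvPolynomial (Fin (n + 1)) ℚ
  | _, 0 => 0
  | 0, _ + 1 => 0
  | i + 1, j + 1 =>
    if i + 1 = j + 1 then pp n (j + 1)
    else ff n i j + (xv n (j + 1) - xv n (i + 1) - tv n) * ff n i (j + 1)

/-- The variable `x_k` (for `1 ≤ k ≤ n`) in `ℚ[x_1,…,x_n]`, realized as
`MvPolynomial (Fin n) ℚ` (with the variable of index `k-1` being `x_k`). -/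
noncomputable def xo (n k : ℕ) : MvPolynomial (Fin n) ℚ :=
  if h : 1 ≤ k ∧ k ≤ n then MvPolynomial.X ⟨k - 1, by omega⟩ else 0

/-- `ǰ_{i,j} := Σ_{k=1}^{j} ( x_k · Π_{ℓ=j+1}^{i} (x_k − x_ℓ) ) ∈ ℚ[x_1,…,x_n]`,
with the empty product equal to `1`. -/
noncomputable def fcheck (n i j : ℕ) : MvPolynomial (Fin n) ℚ :=
  ∑ k ∈ Finset.Icc 1 j, xo n k * ∏ l ∈ Finset.Icc (j + 1) i, (xo n k - xo n l)

/-- The `ℚ`-algebra homomorphism `ℚ[x_1,…,x_n,t] → ℚ[x_1,…,x_n]` substituting `t = 0`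
(and `x_k ↦ x_k`). -/
noncomputable def subT (n : ℕ) : MvPolynomial (Fin (n + 1)) ℚ →ₐ[ℚ] MvPolynomial (Fin n) ℚ :=
  MvPolynomial.aeval fun v : Fin (n + 1) => xo n (v : ℕ)

/-!
Under `t = 0` the recursion for `f_{i,j}` becomes
`f_{i+1,j+1} = f_{i,j} + (x_{j+1} - x_{i+1}) f_{i,j+1}` with `f_{j,j} = x_1 + ⋯ + x_j` and
`f_{i,0} = 0`. The sums `Σ_{k ≤ j} x_k Π_{j < ℓ ≤ i} (x_k - x_ℓ)` satisfy the same recursion: for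
`k ≤ j` the summands combine through
`(x_k - x_{j+1}) + (x_{j+1} - x_{i+1}) = x_k - x_{i+1}`, and the summand `k = j + 1` is the new
term of the second sum. Induction on `i` concludes.
-/

open Finset

section SumMulProdSub

variable {R : Type*} [CommRing R] (x : ℕ → R)

def sumMulProdSub (i j : ℕ) : R :=
  ∑ k ∈ Icc 1 j, x k * ∏ l ∈ Icc (j + 1) i, (x k - x l)

@[simp]
lemma sumMulProdSub_zero_right (i : ℕ) : sumMulProdSub x i 0 = 0 := by
  simp [sumMulProdSub]

lemma sumMulProdSub_self (j : ℕ) : sumMulProdSub x j j = ∑ k ∈ Icc 1 j, x k := by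
  simp [sumMulProdSub]

lemma sumMulProdSub_succ_succ {i j : ℕ} (hji : j < i) :
    sumMulProdSub x (i + 1) (j + 1)
      = sumMulProdSub x i j + (x (j + 1) - x (i + 1)) * sumMulProdSub x i (j + 1) := by
  set P : ℕ → R := fun k => ∏ l ∈ Icc (j + 2) i, (x k - x l)
  have prod_top (k : ℕ) :
      ∏ l ∈ Icc (j + 2) (i + 1), (x k - x l) = P k * (x k - x (i + 1)) :=
    prod_Icc_succ_top (by omega) _
  have prod_bot (k : ℕ) : ∏ l ∈ Icc (j + 1) i, (x k - x l) = (x k - x (j + 1)) * P k := by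
    rw [← mul_prod_Ioc_eq_prod_Icc (by omega), ← Icc_add_one_left_eq_Ioc]
    rfl
  simp only [sumMulProdSub, prod_top, prod_bot, sum_Icc_succ_top (by omega : 1 ≤ j + 1),
    mul_add, mul_sum, ← add_assoc, ← sum_add_distrib]
  congr 1
  · exact sum_congr rfl fun k _ => by ring
  · ring

end SumMulProdSub

lemma fcheck_eq_sumMulProdSub (n i j : ℕ) : fcheck n i j = sumMulProdSub (xo n) i j := rfl

lemma ff_zero_right (n i : ℕ) : ff n i 0 = 0 := by
  cases i <;> rfl

lemma ff_self (n j : ℕ) : ff n j j = pp n j := by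
  cases j with
  | zero => simp [ff, pp]
  | succ j => simp [ff]

lemma ff_succ_succ_of_lt (n : ℕ) {i j : ℕ} (hji : j < i) :
    ff n (i + 1) (j + 1) = ff n i j + (xv n (j + 1) - xv n (i + 1) - tv n) * ff n i (j + 1) := by
  rw [ff, if_neg (by omega)]

lemma subT_xv (n k : ℕ) : subT n (xv n k) = xo n k := by
  unfold xv
  split_ifs with h
  · simp [subT]
  · simp [xo, h]

lemma subT_tv (n : ℕ) : subT n (tv n) = 0 := by
  simp [subT, tv, xo]

lemma subT_pp (n i : ℕ) : subT n (pp n i) = ∑ k ∈ Icc 1 i, xo n k := by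
  simp [pp, subT_xv, subT_tv]

theorem stmt10_general (n i j : ℕ) (hji : j ≤ i) :
    subT n (ff n i j) = fcheck n i j := by
  rw [fcheck_eq_sumMulProdSub]
  induction i generalizing j with
  | zero => simp [Nat.le_zero.mp hji, ff_zero_right]
  | succ i ih =>
    rcases j with _ | j
    · simp [ff_zero_right]
    obtain hj | rfl : j < i ∨ j = i := by omega
    · rw [ff_succ_succ_of_lt n hj, sumMulProdSub_succ_succ _ hj, map_add, map_mul, map_sub,
        map_sub, subT_xv, subT_xv, subT_tv, sub_zero, ih j hj.le, ih (j + 1) hj]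
    · rw [ff_self, subT_pp, sumMulProdSub_self]

/-- For `i ≥ j ≥ 1` (and `i ≤ n`), substituting `t = 0` into `f_{i,j}` yields
`f_{i,j}(x_1,…,x_n,0) = Σ_{k=1}^{j} ( x_k · Π_{ℓ=j+1}^{i} (x_k − x_ℓ) )`. -/
theorem stmt10 (n i j : ℕ) (hj : 1 ≤ j) (hji : j ≤ i) (hin : i ≤ n) :
    subT n (ff n i j) = fcheck n i j :=
  stmt10_general n i j hji
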